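/- arXiv:math/0503689 — 4 statements merged into one kernel-verified Lean document; each statement's English description precedes it below -/
import Mathlib

section
/- Let (V_{a1})_{1≤a≤ℓ} and (H_{ab})_{1≤a≤ℓ, 1≤b≤ℓ+1−a} be nonnegative integers satisfying the inequalities ∑_{k=0}^{b} H_{a−k,k+1} ≤ V_{a+1,1} + ∑_{k=0}^{b} H_{a−k+1,k+1} for all 1 ≤ a ≤ ℓ, 0 ≤ b ≤ a−1 (terms with out-of-range indices interpreted as 0). Then there exists a GT tableau r (of rank ℓ+1, with nonnegative integer entries) such that V_{a1}(r) = V_{a1} and H_{ab}(r) = H_{ab} for all a, b. -/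
/-- A Gelfand–Tsetlin tableau of rank `ℓ+1`. -/
def IsGT (ℓ : ℕ) (r : ℕ → ℕ → ℤ) : Prop :=
  (∀ i j, 1 ≤ i → 1 ≤ j → i + j ≤ ℓ + 2 → 0 ≤ r i j) ∧
  (∀ i j, 1 ≤ i → 1 ≤ j → i + 1 + j ≤ ℓ + 2 → r (i + 1) j ≤ r i j) ∧
  (∀ i j, 1 ≤ i → 1 ≤ j → i + j + 1 ≤ ℓ + 2 → r i (j + 1) ≤ r (i + 1) j)

/-!
The tableau is built diagonal by diagonal. Along the anti-diagonal `i + j = n + 2` the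
coordinates `H_{ab}` with `a + b = n + 1` are successive differences, so `r (i, j)` is a
diagonal offset minus the partial sum `H_{n,1} + H_{n-1,2} + ⋯` of the first `j - 1` of them.
The offsets are tail sums of the `V` coordinates, shifted by a constant that makes every entry
nonnegative. The diagonal inequalities then hold because `H ≥ 0`, and the hypothesis on `V` and
`H` is exactly the vertical inequality `r (i + 1, j) ≤ r (i, j)`.
-/

open Finset

namespace GTCoordinates

def CoordIneqs (ℓ : ℕ) (V : ℕ → ℕ) (H : ℕ → ℕ → ℕ) : Prop :=
  ∀ a b, 1 ≤ a → a ≤ ℓ → b + 1 ≤ a →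
    (∑ k ∈ range (b + 1), H (a - k) (k + 1)) ≤
      V (a + 1) + ∑ k ∈ range (b + 1), H (a - k + 1) (k + 1)

section DiagSum

variable (H : ℕ → ℕ → ℕ)

/-- `H n 1 + H (n-1) 2 + ⋯ + H (n+1-c) c`: the first `c` entries of the anti-diagonal
`a + b = n + 1`. -/
def diagSum (n c : ℕ) : ℕ := ∑ k ∈ range c, H (n - k) (k + 1)

theorem diagSum_zero (n : ℕ) : diagSum H n 0 = 0 := rfl

theorem diagSum_succ (n c : ℕ) : diagSum H n (c + 1) = diagSum H n c + H (n - c) (c + 1) :=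
  sum_range_succ _ _

theorem diagSum_le_succ (n c : ℕ) : diagSum H n c ≤ diagSum H n (c + 1) := by
  rw [diagSum_succ]; exact Nat.le_add_right _ _

theorem diagSum_le_sum_range_sum_range {n c N M : ℕ} (hc : c ≤ N) (hn : n < M) :
    diagSum H n c ≤ ∑ k ∈ range N, ∑ m ∈ range M, H m (k + 1) :=
  calc diagSum H n c ≤ ∑ k ∈ range c, ∑ m ∈ range M, H m (k + 1) :=
        sum_le_sum fun k _ => single_le_sum (f := fun m => H m (k + 1)) (fun _ _ => Nat.zero_le _)
          (mem_range.2 (by omega))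
    _ ≤ ∑ k ∈ range N, ∑ m ∈ range M, H m (k + 1) :=
        sum_le_sum_of_subset (range_subset_range.2 hc)

theorem sum_range_shift_eq_diagSum {n c : ℕ} (hc : c ≤ n + 1) :
    ∑ k ∈ range c, H (n - k + 1) (k + 1) = diagSum H (n + 1) c :=
  sum_congr rfl fun k hk => by rw [mem_range] at hk; rw [Nat.sub_add_comm (by omega)]

theorem diagSum_le_add_diagSum_succ {ℓ : ℕ} {V : ℕ → ℕ} (hineq : CoordIneqs ℓ V H)
    {n c : ℕ} (hc : c ≤ n) (hn : n ≤ ℓ) :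
    diagSum H n c ≤ V (n + 1) + diagSum H (n + 1) c := by
  cases c with
  | zero => exact Nat.zero_le _
  | succ b =>
    rw [← sum_range_shift_eq_diagSum H (by omega)]
    exact hineq n b (by omega) hn hc

end DiagSum

section Tableau

variable (ℓ : ℕ) (V : ℕ → ℕ) (H : ℕ → ℕ → ℕ)

/-- Bounds every `diagSum` occurring in `coordTableau`, so all its entries are nonnegative. -/
def offset : ℕ := ∑ k ∈ range (ℓ + 1), ∑ m ∈ range (ℓ + 1), H m (k + 1)

/-- Rows and columns are indexed from `1`, as in `IsGT`; `i + j - 2` is the index `n` of the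
anti-diagonal. -/
def coordTableau (i j : ℕ) : ℤ :=
  offset ℓ H + ∑ m ∈ Ico (i + j - 1) (ℓ + 1), (V m : ℤ) - diagSum H (i + j - 2) (j - 1)

variable {ℓ V H}

theorem coordTableau_succ_succ {i j n : ℕ} (h : i + j = n) :
    coordTableau ℓ V H (i + 1) (j + 1) =
      offset ℓ H + ∑ m ∈ Ico (n + 1) (ℓ + 1), (V m : ℤ) - diagSum H n j := by
  unfold coordTableau
  rw [show i + 1 + (j + 1) - 1 = n + 1 by omega, show i + 1 + (j + 1) - 2 = n by omega,
    Nat.add_sub_cancel]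

theorem coordTableau_nonneg {i j : ℕ} (hi : 1 ≤ i) (hj : 1 ≤ j) (hij : i + j ≤ ℓ + 2) :
    0 ≤ coordTableau ℓ V H i j := by
  obtain ⟨i, rfl⟩ := Nat.exists_eq_add_of_le' hi
  obtain ⟨j, rfl⟩ := Nat.exists_eq_add_of_le' hj
  rw [coordTableau_succ_succ rfl]
  have hdiag : (diagSum H (i + j) j : ℤ) ≤ offset ℓ H := by
    exact_mod_cast diagSum_le_sum_range_sum_range H (by omega) (by omega)
  have htail : (0 : ℤ) ≤ ∑ m ∈ Ico (i + j + 1) (ℓ + 1), (V m : ℤ) :=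
    sum_nonneg fun _ _ => Int.natCast_nonneg _
  linarith

theorem coordTableau_succ_le (hineq : CoordIneqs ℓ V H)
    {i j : ℕ} (hi : 1 ≤ i) (hj : 1 ≤ j) (hij : i + 1 + j ≤ ℓ + 2) :
    coordTableau ℓ V H (i + 1) j ≤ coordTableau ℓ V H i j := by
  obtain ⟨i, rfl⟩ := Nat.exists_eq_add_of_le' hi
  obtain ⟨j, rfl⟩ := Nat.exists_eq_add_of_le' hj
  rw [coordTableau_succ_succ (n := i + j + 1) (by omega), coordTableau_succ_succ rfl,
    sum_eq_sum_Ico_succ_bot (show i + j + 1 < ℓ + 1 by omega)]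
  have hvert : (diagSum H (i + j) j : ℤ) ≤ V (i + j + 1) + diagSum H (i + j + 1) j := by
    exact_mod_cast diagSum_le_add_diagSum_succ H hineq (by omega) (by omega)
  linarith

theorem coordTableau_succ_right_le {i j : ℕ} (hi : 1 ≤ i) (hj : 1 ≤ j) :
    coordTableau ℓ V H i (j + 1) ≤ coordTableau ℓ V H (i + 1) j := by
  obtain ⟨i, rfl⟩ := Nat.exists_eq_add_of_le' hi
  obtain ⟨j, rfl⟩ := Nat.exists_eq_add_of_le' hj
  rw [coordTableau_succ_succ (n := i + j + 1) (by omega),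
    coordTableau_succ_succ (n := i + j + 1) (by omega)]
  have hdiag : (diagSum H (i + j + 1) j : ℤ) ≤ diagSum H (i + j + 1) (j + 1) := by
    exact_mod_cast diagSum_le_succ H _ _
  linarith

theorem isGT_coordTableau (hineq : CoordIneqs ℓ V H) :
    IsGT ℓ (coordTableau ℓ V H) :=
  ⟨fun _ _ hi hj hij => coordTableau_nonneg hi hj hij,
    fun _ _ hi hj hij => coordTableau_succ_le hineq hi hj hij,
    fun _ _ hi hj _ => coordTableau_succ_right_le hi hj⟩

theorem coordTableau_sub_succ_one {a : ℕ} (ha : 1 ≤ a) (haℓ : a ≤ ℓ) :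
    coordTableau ℓ V H a 1 - coordTableau ℓ V H (a + 1) 1 = V a := by
  obtain ⟨a, rfl⟩ := Nat.exists_eq_add_of_le' ha
  rw [coordTableau_succ_succ (n := a) (by omega), coordTableau_succ_succ (n := a + 1) (by omega),
    sum_eq_sum_Ico_succ_bot (show a + 1 < ℓ + 1 by omega)]
  simp only [diagSum_zero]
  ring

theorem coordTableau_succ_sub {a b : ℕ} (ha : 1 ≤ a) (hb : 1 ≤ b) :
    coordTableau ℓ V H (a + 1) b - coordTableau ℓ V H a (b + 1) = H a b := by
  obtain ⟨b, rfl⟩ := Nat.exists_eq_add_of_le' hb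
  obtain ⟨a, rfl⟩ := Nat.exists_eq_add_of_le' ha
  rw [coordTableau_succ_succ (n := a + b + 1) (by omega),
    coordTableau_succ_succ (n := a + b + 1) (by omega),
    diagSum_succ, show a + b + 1 - b = a + 1 by omega]
  push_cast
  ring

end Tableau

end GTCoordinates

open GTCoordinates in
theorem gt_coordinates_surjective_general (ℓ : ℕ) (V : ℕ → ℕ) (H : ℕ → ℕ → ℕ)
    (hineq : ∀ a b, 1 ≤ a → a ≤ ℓ → b + 1 ≤ a →
      (∑ k ∈ Finset.range (b + 1), H (a - k) (k + 1)) ≤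
        V (a + 1) + ∑ k ∈ Finset.range (b + 1), H (a - k + 1) (k + 1)) :
    ∃ r : ℕ → ℕ → ℤ, IsGT ℓ r ∧
      (∀ a, 1 ≤ a → a ≤ ℓ → r a 1 - r (a + 1) 1 = (V a : ℤ)) ∧
      (∀ a b, 1 ≤ a → 1 ≤ b → a + b ≤ ℓ + 1 →
        r (a + 1) b - r a (b + 1) = (H a b : ℤ)) :=
  ⟨coordTableau ℓ V H, isGT_coordTableau hineq,
    fun _ ha haℓ => coordTableau_sub_succ_one ha haℓ,
    fun _ _ ha hb _ => coordTableau_succ_sub ha hb⟩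

/-- Surjectivity half of the coordinate description of GT tableaux: any nonnegative
integers `V_{a1}`, `H_{ab}` (vanishing out of range) satisfying the inequalities
`∑_{k=0}^{b} H_{a−k,k+1} ≤ V_{a+1,1} + ∑_{k=0}^{b} H_{a−k+1,k+1}` (for `1 ≤ a ≤ ℓ`,
`0 ≤ b ≤ a−1`, out-of-range terms being `0`) arise from a GT tableau. -/
theorem gt_coordinates_surjective (ℓ : ℕ) (V : ℕ → ℕ) (H : ℕ → ℕ → ℕ)
    (hV0 : V 0 = 0) (hV0' : ∀ a, ℓ < a → V a = 0)
    (hH0 : ∀ a b, (a = 0 ∨ b = 0 ∨ ℓ + 1 < a + b) → H a b = 0)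
    (hineq : ∀ a b, 1 ≤ a → a ≤ ℓ → b + 1 ≤ a →
      (∑ k ∈ Finset.range (b + 1), H (a - k) (k + 1)) ≤
        V (a + 1) + ∑ k ∈ Finset.range (b + 1), H (a - k + 1) (k + 1)) :
    ∃ r : ℕ → ℕ → ℤ, IsGT ℓ r ∧
      (∀ a, 1 ≤ a → a ≤ ℓ → r a 1 - r (a + 1) 1 = (V a : ℤ)) ∧
      (∀ a b, 1 ≤ a → 1 ≤ b → a + b ≤ ℓ + 1 →
        r (a + 1) b - r a (b + 1) = (H a b : ℤ)) :=
  gt_coordinates_surjective_general ℓ V H hineq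
end

section
/- For any GT tableau r of rank ℓ+1 with r_{1,ℓ+1} = 0, the quantity ∑_{a=1}^{ℓ} ∑_{b=1}^{ℓ+1−a} H_{ab}(r) + ∑_{b=1}^{ℓ} ∑_{a=1}^{b} V_{a1}(r) is bounded above by ℓ · r_{11}. -/
open Finset

section Telescoping

variable {α : Type*} [AddCommGroup α]

theorem sum_Icc_one_sub_succ (f : ℕ → α) (n : ℕ) :
    ∑ i ∈ Icc 1 n, (f i - f (i + 1)) = f 1 - f (n + 1) := by
  rcases n.eq_zero_or_pos with rfl | hn
  · simp
  · rw [← neg_sub (f (n + 1)) (f 1), ← sum_Icc_sub hn, ← sum_neg_distrib]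
    simp_rw [neg_sub]

theorem sum_Icc_one_sub_le_of_succ_le [PartialOrder α] [IsOrderedAddMonoid α] (g h : ℕ → α)
    (n : ℕ) (hgh : ∀ b ∈ Icc 1 n, g (b + 1) ≤ h b) (hlast : 0 ≤ h (n + 1)) :
    ∑ b ∈ Icc 1 (n + 1), (g b - h b) ≤ g 1 := by
  have hbody : ∑ b ∈ Icc 1 n, (g b - h b) ≤ g 1 - g (n + 1) := by
    rw [← sum_Icc_one_sub_succ]
    gcongr with b hb
    exact hgh b hb
  rw [sum_Icc_succ_top (by omega)]
  calc ∑ b ∈ Icc 1 n, (g b - h b) + (g (n + 1) - h (n + 1))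
      ≤ g 1 - g (n + 1) + (g (n + 1) - 0) := by gcongr
    _ = g 1 := by abel

end Telescoping

theorem IsGT.sum_horizontal_coord_le {ℓ : ℕ} {r : ℕ → ℕ → ℤ} (hr : IsGT ℓ r) {a : ℕ}
    (ha : a ∈ Icc 1 ℓ) :
    ∑ b ∈ Icc 1 (ℓ + 1 - a), (r (a + 1) b - r a (b + 1)) ≤ r (a + 1) 1 := by
  rw [mem_Icc] at ha
  obtain ⟨n, hn⟩ : ∃ n, ℓ + 1 - a = n + 1 := ⟨ℓ - a, by omega⟩
  rw [hn]
  refine sum_Icc_one_sub_le_of_succ_le _ _ n (fun b hb => ?_)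
    (hr.1 a (n + 2) ha.1 (by omega) (by omega))
  rw [mem_Icc] at hb
  exact hr.2.1 a (b + 1) ha.1 (by omega) (by omega)

theorem gt_total_coordinate_bound_general (ℓ : ℕ) (r : ℕ → ℕ → ℤ) (hr : IsGT ℓ r) :
    (∑ a ∈ Finset.Icc 1 ℓ, ∑ b ∈ Finset.Icc 1 (ℓ + 1 - a),
        (r (a + 1) b - r a (b + 1))) +
      (∑ b ∈ Finset.Icc 1 ℓ, ∑ a ∈ Finset.Icc 1 b, (r a 1 - r (a + 1) 1)) ≤
      (ℓ : ℤ) * r 1 1 := by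
  calc _ ≤ ∑ a ∈ Icc 1 ℓ, r (a + 1) 1 + ∑ b ∈ Icc 1 ℓ, (r 1 1 - r (b + 1) 1) := by
        gcongr with a ha b
        · exact hr.sum_horizontal_coord_le ha
        · exact (sum_Icc_one_sub_succ (fun a => r a 1) b).le
    _ = ℓ * r 1 1 := by
        rw [← sum_add_distrib]
        simp

/-- For a GT tableau with `r_{1,ℓ+1} = 0`,
`∑_{a=1}^{ℓ} ∑_{b=1}^{ℓ+1−a} H_{ab}(r) + ∑_{b=1}^{ℓ} ∑_{a=1}^{b} V_{a1}(r) ≤ ℓ·r_{11}`. -/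
theorem gt_total_coordinate_bound (ℓ : ℕ) (r : ℕ → ℕ → ℤ) (hr : IsGT ℓ r)
    (htop : r 1 (ℓ + 1) = 0) :
    (∑ a ∈ Finset.Icc 1 ℓ, ∑ b ∈ Finset.Icc 1 (ℓ + 1 - a),
        (r (a + 1) b - r a (b + 1))) +
      (∑ b ∈ Finset.Icc 1 ℓ, ∑ a ∈ Finset.Icc 1 b, (r a 1 - r (a + 1) 1)) ≤
      (ℓ : ℤ) * r 1 1 :=
  gt_total_coordinate_bound_general ℓ r hr
end

section
/- Let 𝒞 be the set of (equivalence classes of) GT tableaux r of rank ℓ+1 such that for each 1 ≤ b ≤ ℓ, ∏_{a=1}^{ℓ+1−b} H_{ab}(r) = 0 (i.e., for every column b some H_{ab} vanishes). Then every free plane contains exactly one element of 𝒞: for every GT tableau s there is a unique r ∈ 𝒞 with V_{a1}(r) = V_{a1}(s) for all a and H_{ab}(r) − H_{ab}(s) independent of a for each b. -/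
/-- `V_{a1}(r) = r_{a1} − r_{a+1,1}`. -/
def Vc (r : ℕ → ℕ → ℤ) (a : ℕ) : ℤ := r a 1 - r (a + 1) 1

/-- `H_{ab}(r) = r_{a+1,b} − r_{a,b+1}`. -/
def Hc (r : ℕ → ℕ → ℤ) (a b : ℕ) : ℤ := r (a + 1) b - r a (b + 1)

/-- The free-plane relation. -/
def SameFreePlane (ℓ : ℕ) (r s : ℕ → ℕ → ℤ) : Prop :=
  (∀ a, 1 ≤ a → a ≤ ℓ → Vc r a = Vc s a) ∧
  (∀ b, 1 ≤ b → b ≤ ℓ → ∃ c : ℤ, ∀ a, 1 ≤ a → a + b ≤ ℓ + 1 →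
    Hc r a b - Hc s a b = c)

/-- Membership in the complementary axis `𝒞`: in each column `b` some
`H_{ab}` vanishes. -/
def InComplAxis (ℓ : ℕ) (r : ℕ → ℕ → ℤ) : Prop :=
  ∀ b, 1 ≤ b → b ≤ ℓ → ∃ a, 1 ≤ a ∧ a + b ≤ ℓ + 1 ∧ Hc r a b = 0

/-- Minimum of `H_{ab}(s)` over the valid range of `a` in column `b`. -/
def colMin (ℓ : ℕ) (s : ℕ → ℕ → ℤ) (b : ℕ) : ℤ :=
  if h : 1 ≤ b ∧ b ≤ ℓ then
    (Finset.Icc 1 (ℓ + 1 - b)).inf' (Finset.nonempty_Icc.mpr (by omega))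
      (fun a => Hc s a b)
  else 0

lemma colMin_le (ℓ : ℕ) (s : ℕ → ℕ → ℤ) {a b : ℕ} (hb1 : 1 ≤ b) (hb2 : b ≤ ℓ)
    (ha1 : 1 ≤ a) (hab : a + b ≤ ℓ + 1) : colMin ℓ s b ≤ Hc s a b := by
  rw [colMin, dif_pos ⟨hb1, hb2⟩]
  exact Finset.inf'_le _ (Finset.mem_Icc.mpr ⟨ha1, by omega⟩)

lemma colMin_exists (ℓ : ℕ) (s : ℕ → ℕ → ℤ) {b : ℕ} (hb1 : 1 ≤ b) (hb2 : b ≤ ℓ) :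
    ∃ a, 1 ≤ a ∧ a + b ≤ ℓ + 1 ∧ Hc s a b = colMin ℓ s b := by
  rw [colMin, dif_pos ⟨hb1, hb2⟩]
  obtain ⟨a, ha, hval⟩ := Finset.exists_mem_eq_inf'
    (Finset.nonempty_Icc.mpr (by omega : (1:ℕ) ≤ ℓ + 1 - b)) (fun a => Hc s a b)
  rw [Finset.mem_Icc] at ha
  exact ⟨a, ha.1, by omega, hval.symm⟩

lemma Hc_nonneg (ℓ : ℕ) (s : ℕ → ℕ → ℤ) (hs : IsGT ℓ s) {a b : ℕ}
    (ha1 : 1 ≤ a) (hb1 : 1 ≤ b) (hab : a + b ≤ ℓ + 1) : 0 ≤ Hc s a b := by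
  have := hs.2.2 a b ha1 hb1 (by omega)
  simp only [Hc]; omega

lemma colMin_nonneg (ℓ : ℕ) (s : ℕ → ℕ → ℤ) (hs : IsGT ℓ s) (b : ℕ) :
    0 ≤ colMin ℓ s b := by
  by_cases h : 1 ≤ b ∧ b ≤ ℓ
  · obtain ⟨a, ha1, hab, hval⟩ := colMin_exists ℓ s h.1 h.2
    rw [← hval]; exact Hc_nonneg ℓ s hs ha1 h.1 hab
  · rw [colMin, dif_neg h]

/-- Cumulative shift to add to column `j`. -/
def Mshift (ℓ : ℕ) (s : ℕ → ℕ → ℤ) (j : ℕ) : ℤ :=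
  ∑ k ∈ Finset.Ico 1 j, colMin ℓ s k

lemma Mshift_nonneg (ℓ : ℕ) (s : ℕ → ℕ → ℤ) (hs : IsGT ℓ s) (j : ℕ) :
    0 ≤ Mshift ℓ s j :=
  Finset.sum_nonneg fun k _ => colMin_nonneg ℓ s hs k

lemma Mshift_succ (ℓ : ℕ) (s : ℕ → ℕ → ℤ) {j : ℕ} (hj : 1 ≤ j) :
    Mshift ℓ s (j + 1) = Mshift ℓ s j + colMin ℓ s j := by
  unfold Mshift
  rw [Finset.sum_Ico_succ_top hj]

/-- The set `𝒞` is a complementary axis: every free plane contains exactly one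
element of `𝒞` (uniqueness up to the overall-constant equivalence, i.e. up to
having equal `V` and `H` coordinates). -/
theorem complementary_axis (ℓ : ℕ) (s : ℕ → ℕ → ℤ) (hs : IsGT ℓ s) :
    ∃ r : ℕ → ℕ → ℤ, IsGT ℓ r ∧ InComplAxis ℓ r ∧ SameFreePlane ℓ r s ∧
      ∀ r' : ℕ → ℕ → ℤ, IsGT ℓ r' → InComplAxis ℓ r' → SameFreePlane ℓ r' s →
        (∀ a, 1 ≤ a → a ≤ ℓ → Vc r' a = Vc r a) ∧
        (∀ a b, 1 ≤ a → 1 ≤ b → a + b ≤ ℓ + 1 → Hc r' a b = Hc r a b) := by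
  set r : ℕ → ℕ → ℤ := fun i j => s i j + Mshift ℓ s j with hr
  have hHr : ∀ a b, 1 ≤ b → Hc r a b = Hc s a b - colMin ℓ s b := by
    intro a b hb
    simp only [Hc, hr, Mshift_succ ℓ s hb]
    ring
  have hVr : ∀ a, Vc r a = Vc s a := by
    intro a; simp only [Vc, hr]; ring
  refine ⟨r, ?_, ?_, ?_, ?_⟩
  · refine ⟨?_, ?_, ?_⟩
    · intro i j hi hj hij
      have h1 := hs.1 i j hi hj hij
      have h2 := Mshift_nonneg ℓ s hs j
      simp only [hr]; omega
    · intro i j hi hj hij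
      have := hs.2.1 i j hi hj hij
      simp only [hr]; omega
    · intro i j hi hj hij
      have h1 : colMin ℓ s j ≤ Hc s i j := colMin_le ℓ s hj (by omega) hi (by omega)
      simp only [Hc] at h1
      simp only [hr, Mshift_succ ℓ s hj]
      omega
  · intro b hb1 hb2
    obtain ⟨a, ha1, hab, hval⟩ := colMin_exists ℓ s hb1 hb2
    exact ⟨a, ha1, hab, by rw [hHr a b hb1, hval]; ring⟩
  · refine ⟨fun a _ _ => hVr a, fun b hb1 hb2 => ⟨-colMin ℓ s b, fun a _ _ => ?_⟩⟩
    rw [hHr a b hb1]; ring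
  · intro r' hGT' hC' hFP'
    constructor
    · intro a ha1 ha2
      rw [hFP'.1 a ha1 ha2, hVr a]
    · intro a b ha1 hb1 hab
      have hb2 : b ≤ ℓ := by omega
      obtain ⟨c, hc⟩ := hFP'.2 b hb1 hb2
      -- c ≥ -colMin : evaluate at the minimizer of s
      obtain ⟨a0, ha01, ha0b, hval0⟩ := colMin_exists ℓ s hb1 hb2
      have h1 : -colMin ℓ s b ≤ c := by
        have := hc a0 ha01 ha0b
        have hnn : 0 ≤ Hc r' a0 b := Hc_nonneg ℓ r' hGT' ha01 hb1 ha0b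
        omega
      -- c ≤ -colMin : evaluate at the vanishing point of r'
      obtain ⟨a1, ha11, ha1b, hzero⟩ := hC' b hb1 hb2
      have h2 : c ≤ -colMin ℓ s b := by
        have := hc a1 ha11 ha1b
        have hle : colMin ℓ s b ≤ Hc s a1 b := colMin_le ℓ s hb1 hb2 ha11 ha1b
        omega
      have hceq : c = -colMin ℓ s b := le_antisymm h2 h1
      have := hc a ha1 hab
      rw [hHr a b hb1]
      omega
end

section
/- Let d : ℕ² → ℝ \ {0} satisfy: |d(n,k) − d(n,k−1)| ≤ c for all n ≥ 0, k ≥ 1, and |d(n,0) − d(n+1,0)| ≤ c for all n ≥ 0, and suppose that for every M > 0 the set {(n,k) : |d(n,k)| ≤ M} is finite. Suppose furthermore that the sign partition admits no infinite family of pairwise disjoint paths from the positive set to the negative set in the graph on ℕ² with edges (n,k)∼(n,k±1) and (n,0)∼(n±1,0). Then for each n, exactly one of the sets {k : d(n,k) > 0} and {k : d(n,k) < 0} is finite; moreover, after discarding finitely many points, there is a finite set F ⊆ ℕ such that sign d(n,k) = +1 for all k iff n ∈ F, and −1 otherwise (or with + and − interchanged). Equivalently: the set of n for which {k : d(n,k)>0}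 is infinite is either finite or cofinite. -/
/-!
Along a column the values eventually have modulus larger than `c`, and a step of size at most
`c` cannot then cross `0`, so every column has an eventual sign. If infinitely many columns were
eventually positive and infinitely many eventually negative, there would be infinitely many
boundary columns `n` (eventually positive, with `n + 1` eventually negative); going down column
`n`, across the bottom edge and up column `n + 1` gives pairwise disjoint ladders.
-/

/-- The graph on `ℕ²` with edges `(n,k) ∼ (n,k+1)` and `(n,0) ∼ (n+1,0)`. -/
def sphereGraph : SimpleGraph (ℕ × ℕ) :=
  SimpleGraph.fromRel (fun p q =>
    (p.1 = q.1 ∧ p.2 + 1 = q.2) ∨ (p.2 = 0 ∧ q.2 = 0 ∧ p.1 + 1 = q.1))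

open Filter

section ColumnSign

variable {f : ℕ → ℝ} {c : ℝ}

theorem pos_succ_of_pos_of_lt_abs {k : ℕ} (hlip : |f (k + 1) - f k| ≤ c) (hk : 0 < f k)
    (hbig : c < |f (k + 1)|) : 0 < f (k + 1) := by
  by_contra! h
  rw [abs_of_nonpos h] at hbig
  linarith [(abs_le.1 hlip).1]

theorem forall_ge_pos_of_pos {N : ℕ} (hlip : ∀ k, |f (k + 1) - f k| ≤ c)
    (hbig : ∀ k ≥ N, c < |f k|) (hN : 0 < f N) : ∀ k ≥ N, 0 < f k := by
  intro k hk
  induction k, hk using Nat.le_induction with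
  | base => exact hN
  | succ k hk ih => exact pos_succ_of_pos_of_lt_abs (hlip k) ih (hbig _ (by omega))

theorem eventually_pos_or_eventually_neg (hf : ∀ k, f k ≠ 0)
    (hlip : ∀ k, |f (k + 1) - f k| ≤ c) (hsmall : {k | |f k| ≤ c}.Finite) :
    (∀ᶠ k in atTop, 0 < f k) ∨ ∀ᶠ k in atTop, f k < 0 := by
  have hbig : ∀ᶠ k in atTop, c < |f k| := by
    rw [← Nat.cofinite_eq_atTop, eventually_cofinite]
    simpa only [not_lt] using hsmall
  obtain ⟨N, hN⟩ := eventually_atTop.1 hbig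
  rcases (hf N).lt_or_gt with hneg | hpos
  · have hlip' (k : ℕ) : |(-f) (k + 1) - (-f) k| ≤ c := by
      rw [Pi.neg_apply, Pi.neg_apply, neg_sub_neg, abs_sub_comm]
      exact hlip k
    have hbig' (k : ℕ) (hk : k ≥ N) : c < |(-f) k| := by
      rw [Pi.neg_apply, abs_neg]
      exact hN k hk
    exact Or.inr (eventually_atTop.2 ⟨N, fun k hk =>
      neg_pos.1 (forall_ge_pos_of_pos hlip' hbig' (neg_pos.2 hneg) k hk)⟩)
  · exact Or.inl (eventually_atTop.2 ⟨N, forall_ge_pos_of_pos hlip hN hpos⟩)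

theorem finite_pos_infinite_neg_or_infinite_pos_finite_neg (hf : ∀ k, f k ≠ 0)
    (hlip : ∀ k, |f (k + 1) - f k| ≤ c) (hsmall : {k | |f k| ≤ c}.Finite) :
    ({k | 0 < f k}.Finite ∧ {k | f k < 0}.Infinite) ∨
      ({k | 0 < f k}.Infinite ∧ {k | f k < 0}.Finite) := by
  have finite_of_eventually {p : ℕ → Prop} (h : ∀ᶠ k in atTop, ¬p k) : {k | p k}.Finite :=
    (eventually_cofinite.1 (Nat.cofinite_eq_atTop ▸ h)).subset fun _ hk => not_not_intro hk
  rcases eventually_pos_or_eventually_neg hf hlip hsmall with h | h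
  · exact Or.inr ⟨Nat.frequently_atTop_iff_infinite.1 h.frequently,
      finite_of_eventually (h.mono fun _ hk => hk.not_gt)⟩
  · exact Or.inl ⟨finite_of_eventually (h.mono fun _ hk => hk.not_gt),
      Nat.frequently_atTop_iff_infinite.1 h.frequently⟩

end ColumnSign

theorem Set.Infinite.setOf_mem_and_succ_notMem {A : Set ℕ} (hA : A.Infinite)
    (hAc : Aᶜ.Infinite) : {n | n ∈ A ∧ n + 1 ∉ A}.Infinite := by
  intro hfin
  obtain ⟨B, hB⟩ := hfin.bddAbove
  obtain ⟨x, hxA, hBx⟩ := hA.exists_gt B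
  have hsucc : ∀ m, x ≤ m → m ∈ A := by
    intro m hm
    induction m, hm using Nat.le_induction with
    | base => exact hxA
    | succ m hm ih => exact not_not.1 fun h => by have := hB ⟨ih, h⟩; omega
  obtain ⟨y, hyA, hxy⟩ := hAc.exists_gt x
  exact hyA (hsucc y hxy.le)

namespace sphereGraph

theorem adj_succ_snd (n k : ℕ) : sphereGraph.Adj (n, k + 1) (n, k) := by
  rw [sphereGraph, SimpleGraph.fromRel_adj]
  exact ⟨by simp, Or.inr (Or.inl ⟨rfl, rfl⟩)⟩

theorem adj_succ_fst (n : ℕ) : sphereGraph.Adj (n, 0) (n + 1, 0) := by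
  rw [sphereGraph, SimpleGraph.fromRel_adj]
  exact ⟨by simp, Or.inl (Or.inr ⟨rfl, rfl, rfl⟩)⟩

def columnWalk (n : ℕ) : (k : ℕ) → sphereGraph.Walk (n, k) (n, 0)
  | 0 => .nil
  | k + 1 => .cons (adj_succ_snd n k) (columnWalk n k)

theorem fst_eq_of_mem_support_columnWalk {n k : ℕ} {x : ℕ × ℕ}
    (hx : x ∈ (columnWalk n k).support) : x.1 = n := by
  induction k with
  | zero => simp_all [columnWalk]
  | succ k ih =>
    rw [columnWalk, SimpleGraph.Walk.support_cons, List.mem_cons] at hx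
    rcases hx with rfl | hx
    · rfl
    · exact ih hx

def ladder (n k l : ℕ) : sphereGraph.Walk (n, k) (n + 1, l) :=
  (columnWalk n k).append (.cons (adj_succ_fst n) (columnWalk (n + 1) l).reverse)

theorem fst_mem_of_mem_support_ladder {n k l : ℕ} {x : ℕ × ℕ}
    (hx : x ∈ (ladder n k l).support) : x.1 = n ∨ x.1 = n + 1 := by
  rw [ladder, SimpleGraph.Walk.mem_support_append_iff, SimpleGraph.Walk.support_cons,
    List.mem_cons, SimpleGraph.Walk.support_reverse, List.mem_reverse] at hx
  rcases hx with hx | rfl | hx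
  · exact Or.inl (fst_eq_of_mem_support_columnWalk hx)
  · exact Or.inl rfl
  · exact Or.inr (fst_eq_of_mem_support_columnWalk hx)

end sphereGraph

def HasInfiniteLadder (d : ℕ × ℕ → ℝ) : Prop :=
  ∃ (p : ℕ → (ℕ × ℕ) × (ℕ × ℕ)) (w : ∀ i, sphereGraph.Walk (p i).1 (p i).2),
    (∀ i, 0 < d (p i).1) ∧ (∀ i, d (p i).2 < 0) ∧
    (∀ i j, i ≠ j → ∀ x, x ∈ (w i).support → x ∉ (w j).support)

theorem hasInfiniteLadder_of_infinite_of_infinite_compl {d : ℕ × ℕ → ℝ} {A : Set ℕ}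
    (hpos : ∀ n ∈ A, ∃ k, 0 < d (n, k)) (hneg : ∀ n ∉ A, ∃ k, d (n, k) < 0)
    (hA : A.Infinite) (hAc : Aᶜ.Infinite) : HasInfiniteLadder d := by
  let e := (hA.setOf_mem_and_succ_notMem hAc).natEmbedding
  have he (i : ℕ) : (e i : ℕ) ∈ A ∧ (e i : ℕ) + 1 ∉ A := (e i).2
  choose k hk using fun i => hpos _ (he i).1
  choose l hl using fun i => hneg _ (he i).2
  refine ⟨fun i => ((e i, k i), (e i + 1, l i)), fun i => sphereGraph.ladder (e i) (k i) (l i),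
    hk, hl, fun i j hij x hxi hxj => ?_⟩
  have hne : (e i : ℕ) ≠ e j := fun h => hij (e.injective (Subtype.ext h))
  -- consecutive boundary columns are impossible: `e i + 1 ∉ A` but `e j ∈ A`
  have hij' : (e i : ℕ) + 1 ≠ e j := fun h => (he i).2 (h ▸ (he j).1)
  have hji' : (e j : ℕ) + 1 ≠ e i := fun h => (he j).2 (h ▸ (he i).1)
  rcases sphereGraph.fst_mem_of_mem_support_ladder hxi with h | h <;>
    rcases sphereGraph.fst_mem_of_mem_support_ladder hxj with h' | h' <;> omega

theorem sphere_sign_characterization_general (d : ℕ × ℕ → ℝ) (c : ℝ)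
    (hd : ∀ p, d p ≠ 0)
    (hlip1 : ∀ n k, |d (n, k + 1) - d (n, k)| ≤ c)
    (hcpt : ∀ M : ℝ, {p : ℕ × ℕ | |d p| ≤ M}.Finite)
    (hladder : ¬∃ (p : ℕ → (ℕ × ℕ) × (ℕ × ℕ))
        (w : ∀ i, sphereGraph.Walk (p i).1 (p i).2),
      (∀ i, 0 < d (p i).1) ∧ (∀ i, d (p i).2 < 0) ∧
      (∀ i j, i ≠ j → ∀ x, x ∈ (w i).support → x ∉ (w j).support)) :
    (∀ n : ℕ,
      ({k : ℕ | 0 < d (n, k)}.Finite ∧ {k : ℕ | d (n, k) < 0}.Infinite) ∨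
      ({k : ℕ | 0 < d (n, k)}.Infinite ∧ {k : ℕ | d (n, k) < 0}.Finite)) ∧
    ({n : ℕ | {k : ℕ | 0 < d (n, k)}.Infinite}.Finite ∨
      {n : ℕ | {k : ℕ | 0 < d (n, k)}.Infinite}ᶜ.Finite) := by
  have hcol (n : ℕ) := finite_pos_infinite_neg_or_infinite_pos_finite_neg (fun k => hd (n, k))
    (hlip1 n) ((hcpt c).preimage (Prod.mk_right_injective n).injOn)
  refine ⟨hcol, ?_⟩
  by_contra! h
  refine hladder (hasInfiniteLadder_of_infinite_of_infinite_compl (A := {n | _}) ?_ ?_ h.1 h.2)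
  · exact fun n hn => hn.nonempty
  · intro n hn
    exact ((hcol n).resolve_right fun h' => hn h'.1).2.nonempty

/-- Sign characterization on the quantum sphere (combinatorial form): under the
edge-Lipschitz bound, the compact-resolvent condition and the absence of an
infinite ladder, for each `n` exactly one of `{k : d(n,k) > 0}` and
`{k : d(n,k) < 0}` is finite, and the set of `n` for which `{k : d(n,k) > 0}`
is infinite is finite or cofinite. -/
theorem sphere_sign_characterization (d : ℕ × ℕ → ℝ) (c : ℝ) (hc : 0 < c)
    (hd : ∀ p, d p ≠ 0)
    (hlip1 : ∀ n k, |d (n, k + 1) - d (n, k)| ≤ c)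
    (hlip2 : ∀ n, |d (n, 0) - d (n + 1, 0)| ≤ c)
    (hcpt : ∀ M : ℝ, {p : ℕ × ℕ | |d p| ≤ M}.Finite)
    (hladder : ¬∃ (p : ℕ → (ℕ × ℕ) × (ℕ × ℕ))
        (w : ∀ i, sphereGraph.Walk (p i).1 (p i).2),
      (∀ i, 0 < d (p i).1) ∧ (∀ i, d (p i).2 < 0) ∧
      (∀ i j, i ≠ j → ∀ x, x ∈ (w i).support → x ∉ (w j).support)) :
    (∀ n : ℕ,
      ({k : ℕ | 0 < d (n, k)}.Finite ∧ {k : ℕ | d (n, k) < 0}.Infinite) ∨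
      ({k : ℕ | 0 < d (n, k)}.Infinite ∧ {k : ℕ | d (n, k) < 0}.Finite)) ∧
    ({n : ℕ | {k : ℕ | 0 < d (n, k)}.Infinite}.Finite ∨
      {n : ℕ | {k : ℕ | 0 < d (n, k)}.Infinite}ᶜ.Finite) :=
  sphere_sign_characterization_general d c hd hlip1 hcpt hladder
end
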